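/- Let γ ∈ (0,1), b > 0, c < 0, a ≤ 0, μ > 0, μ₂ > 0, set j_b(k) = 1 + μ b k², j_c(k) = 1 + μ|c| k², let l(k) be the symbol of L_{μ₂}, and define R_γ(x) = (1 − γ)·j_c(x)·l(x)/j_b(x)². Suppose c_s² < inf_{x ≥ 0} R_γ(x). Define λ_±(k) = (1/2)·( (1 − γ)·j_c(k) + l(k) ± sqrt( ((1 − γ)·j_c(k) − l(k))² + 4 c_s²·j_b(k)² ) ), the eigenvalues of the symbol matrix Q̂(k). Then there exist positive constants c₀, c₁, d₀, d₁ such that for all real k: c₀ + c₁·k² ≤ λ₋(k) ≤ λ₊(k) ≤ d₀ + d₁·k². -/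

import Mathlib

/-- The hyperbolic cotangent. -/
noncomputable def coth (y : ℝ) : ℝ := Real.cosh y / Real.sinh y

/-- The Fourier symbol `l(k)` of the nonlocal operator `L_{μ₂}`, with the limit value at
`k = 0`. -/
noncomputable def lSym (γ a μ μ₂ k : ℝ) : ℝ :=
  if k = 0 then
    1 / γ - Real.sqrt μ / (γ ^ 2 * Real.sqrt μ₂) + μ / (γ ^ 3 * μ₂)
  else
    1 / γ - (Real.sqrt μ / γ ^ 2) * (|k| * coth (Real.sqrt μ₂ * |k|))
      - (μ / γ) * (a - (1 / γ ^ 2) * (coth (Real.sqrt μ₂ * |k|)) ^ 2) * k ^ 2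

/-- The symbol of `J_b = 1 - μ b ∂ₓ²`. -/
def jb (μ b k : ℝ) : ℝ := 1 + μ * b * k ^ 2

/-- The symbol of `J_c = 1 + μ c ∂ₓ²` for `c ≤ 0`. -/
def jc (μ c k : ℝ) : ℝ := 1 + μ * |c| * k ^ 2

/-- The ratio `R_γ(x) = (1 - γ) j_c(x) l(x) / j_b(x)²`. -/
noncomputable def Rgamma (γ a b c μ μ₂ x : ℝ) : ℝ :=
  (1 - γ) * jc μ c x * lSym γ a μ μ₂ x / (jb μ b x) ^ 2

/-- The eigenvalues `λ₋(k)` and `λ₊(k)` of the symbol matrix `Q̂(k)`: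
`λ_±(k) = (1/2)((1-γ)j_c(k) + l(k) ± √(((1-γ)j_c(k) - l(k))² + 4 c_s² j_b(k)²))`. -/
noncomputable def lamMinus (γ a b c μ μ₂ cs k : ℝ) : ℝ :=
  (1 / 2) * ((1 - γ) * jc μ c k + lSym γ a μ μ₂ k
    - Real.sqrt (((1 - γ) * jc μ c k - lSym γ a μ μ₂ k) ^ 2 + 4 * cs ^ 2 * (jb μ b k) ^ 2))

noncomputable def lamPlus (γ a b c μ μ₂ cs k : ℝ) : ℝ :=
  (1 / 2) * ((1 - γ) * jc μ c k + lSym γ a μ μ₂ k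
    + Real.sqrt (((1 - γ) * jc μ c k - lSym γ a μ μ₂ k) ^ 2 + 4 * cs ^ 2 * (jb μ b k) ^ 2))

lemma aux_one_le_coth {y : ℝ} (hy : 0 < y) : 1 ≤ coth y := by
  have hs := Real.sinh_pos_iff.mpr hy
  have h := Real.cosh_sub_sinh y
  have he : 0 < Real.exp (-y) := Real.exp_pos _
  rw [coth, le_div_iff₀ hs]; nlinarith

lemma aux_coth_le {y : ℝ} (hy : 0 < y) : coth y ≤ 1 + 1/y := by
  have hs := Real.sinh_pos_iff.mpr hy
  have h := Real.cosh_sub_sinh y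
  have he : Real.exp (-y) < 1 := Real.exp_lt_one_iff.mpr (by linarith)
  have hsl : y < Real.sinh y := Real.self_lt_sinh_iff.mpr hy
  have h2 : y * Real.exp (-y) < Real.sinh y := by nlinarith [Real.exp_pos (-y)]
  have h4 : Real.exp (-y) ≤ Real.sinh y / y := (le_div_iff₀ hy).mpr (by linarith)
  have h3 : (1 + 1/y) * Real.sinh y = Real.sinh y + (Real.sinh y / y) := by ring
  rw [coth, div_le_iff₀ hs, h3]
  linarith

/-- `lSym` is even. -/
lemma aux_lSym_abs (γ a μ μ₂ k : ℝ) : lSym γ a μ μ₂ k = lSym γ a μ μ₂ |k| := by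
  rcases eq_or_ne k 0 with h | h
  · simp [h]
  · have h' : |k| ≠ 0 := abs_ne_zero.mpr h
    simp [lSym, h, h', abs_abs, sq_abs]

/-- quadratic upper bound on `lSym`. -/
lemma aux_lSym_upper (γ a μ μ₂ : ℝ) (hγ0 : 0 < γ) (ha : a ≤ 0) (hμ : 0 < μ) (hμ₂ : 0 < μ₂)
    (k : ℝ) :
    lSym γ a μ μ₂ k ≤ (1/γ + (μ/γ^3)*(1/Real.sqrt μ₂ + 1/μ₂))
      + (μ*|a|/γ + (μ/γ^3)*(1 + 1/Real.sqrt μ₂)) * k^2 := by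
  have hs : 0 < Real.sqrt μ₂ := Real.sqrt_pos.mpr hμ₂
  set s := Real.sqrt μ₂ with hsdef
  have hs2 : s^2 = μ₂ := Real.sq_sqrt hμ₂.le
  have hsqμ : 0 ≤ Real.sqrt μ := Real.sqrt_nonneg μ
  have haabs : |a| = -a := abs_of_nonpos ha
  rcases eq_or_ne k 0 with h | h
  · rw [lSym, if_pos h, h]
    have e1 : μ / (γ^3 * μ₂) = (μ/γ^3) * (1/μ₂) := by ring
    have p1 : 0 ≤ Real.sqrt μ / (γ^2 * s) := by positivity
    have p2 : 0 ≤ (μ/γ^3) * (1/s) := by positivity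
    have p3 : 0 ≤ (μ*|a|/γ + (μ/γ^3)*(1 + 1/s)) := by positivity
    nlinarith
  · have hk : 0 < |k| := abs_pos.mpr h
    have hy : 0 < s * |k| := mul_pos hs hk
    have h1 := aux_one_le_coth hy
    have h2 := aux_coth_le hy
    rw [lSym, if_neg h]
    rw [← hsdef]
    have hck : coth (s*|k|) * |k| ≤ |k| + 1/s := by
      have : coth (s*|k|) * |k| ≤ (1 + 1/(s*|k|)) * |k| :=
        mul_le_mul_of_nonneg_right h2 hk.le
      have e : (1 + 1/(s*|k|)) * |k| = |k| + 1/s := by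
        field_simp
      linarith
    have hck0 : 0 ≤ coth (s*|k|) * |k| := by nlinarith
    have hsq : (coth (s*|k|))^2 * k^2 ≤ (|k| + 1/s)^2 := by
      have : (coth (s*|k|) * |k|)^2 ≤ (|k| + 1/s)^2 := by
        apply pow_le_pow_left₀ hck0 hck
      calc (coth (s*|k|))^2 * k^2 = (coth (s*|k|) * |k|)^2 := by rw [mul_pow, sq_abs]
        _ ≤ (|k| + 1/s)^2 := this
    have hexp : (|k| + 1/s)^2 ≤ k^2 + (1 + k^2) * (1/s) + 1/μ₂ := by
      have h2abs : 2*|k| ≤ 1 + k^2 := by nlinarith [sq_nonneg (|k|-1), sq_abs k]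
      have ht2 : (1/s)^2 = 1/μ₂ := by rw [← hs2]; ring
      have hts : 0 < 1/s := by positivity
      have e2 : (|k| + 1/s)^2 = |k|^2 + 2 * (|k| * (1/s)) + (1/s)^2 := by ring
      rw [e2, sq_abs, ht2]
      nlinarith [mul_le_mul_of_nonneg_right h2abs hts.le]
    have hdrop : 0 ≤ (Real.sqrt μ / γ^2) * (|k| * coth (s*|k|)) := by
      apply mul_nonneg (by positivity)
      exact mul_nonneg hk.le (by linarith)
    have hsplit : 1 / γ - (Real.sqrt μ / γ ^ 2) * (|k| * coth (s * |k|))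
        - (μ / γ) * (a - (1 / γ ^ 2) * (coth (s * |k|)) ^ 2) * k ^ 2
        = 1/γ - (Real.sqrt μ / γ ^ 2) * (|k| * coth (s * |k|))
          + (μ*|a|/γ) * k^2 + (μ/γ^3) * ((coth (s*|k|))^2 * k^2) := by
      rw [haabs]; field_simp; ring
    rw [hsplit]
    have hg3 : 0 < μ/γ^3 := by positivity
    have : (μ/γ^3) * ((coth (s*|k|))^2 * k^2)
        ≤ (μ/γ^3) * (k^2 + (1 + k^2) * (1/s) + 1/μ₂) := by
      apply mul_le_mul_of_nonneg_left (le_trans hsq hexp) hg3.le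
    linarith

set_option maxHeartbeats 2000000 in
/-- If `c_s² < inf_{x ≥ 0} R_γ(x)`, then the eigenvalues of the symbol matrix `Q̂(k)` are
bounded above and below by quadratics with positive coefficients:
`c₀ + c₁ k² ≤ λ₋(k) ≤ λ₊(k) ≤ d₀ + d₁ k²`. -/
theorem eigenvalue_two_sided_bounds (γ a b c μ μ₂ cs : ℝ) (hγ : γ ∈ Set.Ioo (0 : ℝ) 1)
    (hb : 0 < b) (hc : c < 0) (ha : a ≤ 0) (hμ : 0 < μ) (hμ₂ : 0 < μ₂)
    (hcs : cs ^ 2 < sInf ((fun x => Rgamma γ a b c μ μ₂ x) '' Set.Ici 0)) :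
    ∃ c₀ > 0, ∃ c₁ > 0, ∃ d₀ > 0, ∃ d₁ > 0, ∀ k : ℝ,
      c₀ + c₁ * k ^ 2 ≤ lamMinus γ a b c μ μ₂ cs k ∧
      lamMinus γ a b c μ μ₂ cs k ≤ lamPlus γ a b c μ μ₂ cs k ∧
      lamPlus γ a b c μ μ₂ cs k ≤ d₀ + d₁ * k ^ 2 := by
  obtain ⟨hγ0, hγ1⟩ := hγ
  have hcabs : 0 < |c| := abs_pos.mpr hc.ne
  -- bddBelow
  have hbdd : BddBelow ((fun x => Rgamma γ a b c μ μ₂ x) '' Set.Ici 0) := by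
    by_contra hcon
    rw [Real.sInf_of_not_bddBelow hcon] at hcs
    nlinarith [sq_nonneg cs]
  set I := sInf ((fun x => Rgamma γ a b c μ μ₂ x) '' Set.Ici 0) with hI
  set δ := I - cs^2 with hδdef
  have hδ : 0 < δ := by simp [hδdef]; linarith
  have hRle : ∀ x : ℝ, 0 ≤ x → I ≤ Rgamma γ a b c μ μ₂ x := fun x hx =>
    csInf_le hbdd ⟨x, hx, rfl⟩
  -- basic positivity of symbols
  have hjb1 : ∀ k : ℝ, 1 ≤ jb μ b k := by
    intro k; rw [jb]; have : 0 ≤ μ * b * k^2 := by positivity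
    linarith
  have hjc1 : ∀ k : ℝ, 1 ≤ jc μ c k := by
    intro k; rw [jc]; have : 0 ≤ μ * |c| * k^2 := by positivity
    linarith
  have hjbabs : ∀ k : ℝ, jb μ b |k| = jb μ b k := by intro k; rw [jb, jb, sq_abs]
  have hjcabs : ∀ k : ℝ, jc μ c |k| = jc μ c k := by intro k; rw [jc, jc, sq_abs]
  -- determinant lower bound
  have hdet : ∀ k : ℝ, (cs^2 + δ) * (jb μ b k)^2 ≤
      (1 - γ) * jc μ c k * lSym γ a μ μ₂ k := by
    intro k
    have hx := hRle |k| (abs_nonneg k)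
    have hjbpos : (0:ℝ) < (jb μ b |k|)^2 := by
      have := hjb1 |k|; nlinarith
    rw [Rgamma, le_div_iff₀ hjbpos] at hx
    rw [hjbabs, hjcabs, ← aux_lSym_abs] at hx
    have : cs^2 + δ = I := by rw [hδdef]; ring
    rw [this]
    linarith
  -- l positivity
  have hlpos : ∀ k : ℝ, 0 < lSym γ a μ μ₂ k := by
    intro k
    have h1 := hdet k
    have h2 := hjb1 k
    have h3 := hjc1 k
    have hP : 0 < (1 - γ) * jc μ c k := mul_pos (by linarith) (by linarith)
    by_contra hneg
    push_neg at hneg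
    have h5 : (1 - γ) * jc μ c k * lSym γ a μ μ₂ k ≤ 0 :=
      mul_nonpos_of_nonneg_of_nonpos hP.le hneg
    have h6 : 0 < (cs^2 + δ) * (jb μ b k)^2 :=
      mul_pos (by positivity) (pow_pos (by linarith) 2)
    linarith
  -- l upper bound
  set U0 := 1/γ + (μ/γ^3)*(1/Real.sqrt μ₂ + 1/μ₂) with hU0def
  set U1 := μ*|a|/γ + (μ/γ^3)*(1 + 1/Real.sqrt μ₂) with hU1def
  have hU0 : 0 < U0 := by rw [hU0def]; positivity
  have hU1pos : 0 ≤ U1 := by rw [hU1def]; positivity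
  have hlup : ∀ k : ℝ, lSym γ a μ μ₂ k ≤ U0 + U1 * k^2 :=
    fun k => aux_lSym_upper γ a μ μ₂ hγ0 ha hμ hμ₂ k
  -- upper bound constants
  set d₀ := 1 + U0 + |cs| with hd₀def
  set d₁ := μ*|c| + U1 + |cs| * (μ*b) with hd₁def
  have hd₀ : 0 < d₀ := by rw [hd₀def]; positivity
  have hd₁ : 0 < d₁ := by rw [hd₁def]; positivity
  -- lamPlus upper bound
  have hplus_ub : ∀ k : ℝ, lamPlus γ a b c μ μ₂ cs k ≤ d₀ + d₁ * k^2 := by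
    intro k
    set P := (1 - γ) * jc μ c k with hPdef
    set l := lSym γ a μ μ₂ k with hldef
    set J := jb μ b k with hJdef
    clear_value P l J
    have hJ1 : 1 ≤ J := by rw [hJdef]; exact hjb1 k
    have hP0 : 0 < P := by
      have := hjc1 k; rw [hPdef]; exact mul_pos (by linarith) (by linarith)
    have hl0 : 0 < l := by rw [hldef]; exact hlpos k
    have hsqrt : Real.sqrt ((P - l)^2 + 4*cs^2*J^2) ≤ |P - l| + 2 * |cs| * J := by
      have h1 : (P - l)^2 + 4*cs^2*J^2 ≤ (|P - l| + 2 * |cs| * J)^2 := by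
        have : (|P - l| + 2 * |cs| * J)^2 = |P-l|^2 + 4 * |P-l| * |cs| * J + 4 * |cs|^2 * J^2 := by ring
        rw [this, sq_abs, sq_abs]
        have : 0 ≤ 4 * |P-l| * |cs| * J := by positivity
        linarith
      calc Real.sqrt ((P - l)^2 + 4*cs^2*J^2) ≤ Real.sqrt ((|P - l| + 2 * |cs| * J)^2) :=
            Real.sqrt_le_sqrt h1
        _ = |P - l| + 2 * |cs| * J := Real.sqrt_sq (by positivity)
    have habsPl : |P - l| ≤ P + l := by
      rw [abs_le]; constructor <;> nlinarith
    have hlam : lamPlus γ a b c μ μ₂ cs k ≤ P + l + |cs| * J := by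
      rw [lamPlus, ← hPdef, ← hldef, ← hJdef]
      have hcsJ : 0 ≤ |cs| * J := by positivity
      linarith
    have hPub : P ≤ 1 + μ * |c| * k^2 := by
      rw [hPdef, jc]
      have h9 : 0 ≤ γ * (1 + μ * |c| * k^2) := by positivity
      nlinarith
    have hlub : l ≤ U0 + U1 * k^2 := by rw [hldef]; exact hlup k
    have hJub : |cs| * J ≤ |cs| + |cs| * (μ*b)*k^2 := by
      rw [hJdef, jb]
      have : |cs| * (1 + μ*b*k^2) = |cs| + |cs| * (μ*b)*k^2 := by ring
      rw [this]
    rw [hd₀def, hd₁def]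
    linarith
  -- lower bound constants
  set ε := min (δ/d₀) (δ*(μ*b)/d₁) with hεdef
  have hε : 0 < ε := by
    rw [hεdef]
    apply lt_min (by positivity) (by positivity)
  refine ⟨ε, hε, ε*(μ*b), by positivity, d₀, hd₀, d₁, hd₁, fun k => ?_⟩
  set P := (1 - γ) * jc μ c k with hPdef
  set l := lSym γ a μ μ₂ k with hldef
  set J := jb μ b k with hJdef
  clear_value P l J
  have hJ1 : 1 ≤ J := by rw [hJdef]; exact hjb1 k
  have hP0 : 0 < P := by
    have := hjc1 k; rw [hPdef]; exact mul_pos (by linarith) (by linarith)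
  have hl0 : 0 < l := by rw [hldef]; exact hlpos k
  set S := (P - l)^2 + 4*cs^2*J^2 with hSdef
  have hS0 : 0 ≤ S := by rw [hSdef]; positivity
  have hsqS : Real.sqrt S ^ 2 = S := Real.sq_sqrt hS0
  have hsqnn : 0 ≤ Real.sqrt S := Real.sqrt_nonneg S
  have hmm : lamMinus γ a b c μ μ₂ cs k ≤ lamPlus γ a b c μ μ₂ cs k := by
    rw [lamMinus, lamPlus, ← hPdef, ← hldef, ← hJdef, ← hSdef]
    linarith
  have hplus : lamPlus γ a b c μ μ₂ cs k ≤ d₀ + d₁ * k^2 := hplus_ub k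
  have hpluspos : 0 < lamPlus γ a b c μ μ₂ cs k := by
    rw [lamPlus, ← hPdef, ← hldef, ← hJdef, ← hSdef]
    linarith
  -- product identity
  have hprod : lamMinus γ a b c μ μ₂ cs k * lamPlus γ a b c μ μ₂ cs k
      = P * l - cs^2 * J^2 := by
    rw [lamMinus, lamPlus, ← hPdef, ← hldef, ← hJdef, ← hSdef]
    have : (1/2 * (P + l - Real.sqrt S)) * (1/2 * (P + l + Real.sqrt S))
        = (1/4) * ((P+l)^2 - Real.sqrt S ^ 2) := by ring
    rw [this, hsqS, hSdef]; ring
  have hdetk : (cs^2 + δ) * J^2 ≤ P * l := by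
    have := hdet k; rw [← hPdef, ← hldef, ← hJdef] at this; linarith
  have hprodlb : δ * J^2 ≤ lamMinus γ a b c μ μ₂ cs k * lamPlus γ a b c μ μ₂ cs k := by
    rw [hprod]; linarith
  -- ε choice facts
  have hεd₀ : ε * d₀ ≤ δ := by
    have h1 : ε ≤ δ/d₀ := min_le_left _ _
    rw [← le_div_iff₀ hd₀]; exact h1
  have hεd₁ : ε * d₁ ≤ δ * (μ*b) := by
    have h1 : ε ≤ δ*(μ*b)/d₁ := min_le_right _ _
    rw [← le_div_iff₀ hd₁]; exact h1
  have hkey : ε * (d₀ + d₁ * k^2) ≤ δ * J := by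
    rw [hJdef, jb]
    have h7 : ε * d₁ * k^2 ≤ δ * (μ*b) * k^2 :=
      mul_le_mul_of_nonneg_right hεd₁ (sq_nonneg k)
    have h8 : ε * (d₀ + d₁ * k^2) = ε * d₀ + ε * d₁ * k^2 := by ring
    have h9 : δ * (1 + μ*b*k^2) = δ + δ * (μ*b) * k^2 := by ring
    rw [h8, h9]
    linarith
  have hlow : ε + ε*(μ*b) * k^2 ≤ lamMinus γ a b c μ μ₂ cs k := by
    have hεJ : ε + ε*(μ*b)*k^2 = ε * J := by rw [hJdef, jb]; ring
    rw [hεJ]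
    -- ε J * lamPlus ≤ δ J^2 ≤ lamMinus * lamPlus
    have h1 : ε * J * lamPlus γ a b c μ μ₂ cs k ≤ δ * J * J := by
      have h2 : ε * lamPlus γ a b c μ μ₂ cs k ≤ ε * (d₀ + d₁*k^2) :=
        mul_le_mul_of_nonneg_left hplus hε.le
      have h4 : ε * lamPlus γ a b c μ μ₂ cs k * J ≤ δ * J * J :=
        mul_le_mul_of_nonneg_right (le_trans h2 hkey) (by linarith)
      linarith [h4, mul_comm J (lamPlus γ a b c μ μ₂ cs k)]
    have h3 : ε * J * lamPlus γ a b c μ μ₂ cs k ≤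
        lamMinus γ a b c μ μ₂ cs k * lamPlus γ a b c μ μ₂ cs k := by
      have hJ2 : δ * J * J = δ * J^2 := by ring
      linarith [hprodlb]
    exact le_of_mul_le_mul_right h3 hpluspos
  exact ⟨hlow, hmm, hplus⟩
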